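/- For every positive integer n, the sum over all binary trees T with n vertices of (n!/2^n) · Π_{v ∈ T} (1 + 1/h_v) equals (n+1)^{n-1} (Postnikov's hook length formula). -/

import Mathlib

/-!
Write `u n = n! / 2^n * Σ_T ∏_v (1 + 1/h_v)`. Splitting a tree at its root, the root has hook
length `n + 1` and the two subtrees are arbitrary, so `u (n+1) = (n+2)/2 * Σ_{i+j=n} C(n,i) u i u j`.
That `(n+1)^(n-1)` satisfies the same recursion is the convolution
`(n+2) Σ_{i+j=n} C(n,i) (i+1)^(i-1) (j+1)^(j-1) = 2 (n+2)^n`, which follows from the instances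
`y = 1` and `y = 2` of Abel's identity `Σ_{i+j=n} C(n,i) (i+1)^(i-1) (y+j)^j = (y+n+1)^n`
after writing `(j+1)^(j-1) = (j+1)^j - j (j+1)^(j-1)`. The latter is proved as a polynomial identity in
`y` by induction on `n`: both sides have the same derivative by the induction hypothesis at
`y + 1`, and both vanish at `y = -(n+1)`, where the left side is an `n`-th finite difference of a
polynomial of degree `n - 1`.
-/

/-- The product over all vertices `v` of a binary tree of `f h_v`, where `h_v` is the
hook length of `v`, i.e. the number of vertices of the subtree rooted at `v`. -/
def hookProd (f : ℕ → ℚ) : Tree Unit → ℚ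
  | BinaryTree.nil => 1
  | BinaryTree.node _ l r =>
      f (l.numNodes + r.numNodes + 1) * hookProd f l * hookProd f r

open Finset Polynomial
open scoped Nat

theorem sum_antidiagonal_choose_mul_snd_mul {R : Type*} [CommSemiring R] (n : ℕ)
    (f : ℕ → ℕ → R) :
    ∑ p ∈ antidiagonal (n + 1), ((n + 1).choose p.1 * p.2 : R) * f p.1 p.2 =
      (n + 1) * ∑ p ∈ antidiagonal n, (n.choose p.1 : R) * f p.1 (p.2 + 1) := by
  rw [Nat.sum_antidiagonal_succ', mul_sum]
  simp only [Nat.cast_zero, mul_zero, zero_mul, zero_add, ← mul_assoc]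
  refine sum_congr rfl fun p hp => ?_
  have hchoose : (n + 1).choose p.1 * (p.2 + 1) = (n + 1) * n.choose p.1 := by
    rw [← mem_antidiagonal.mp hp, mul_comm (_ + 1), Nat.choose_mul_succ_eq]
    congr 2; omega
  exact_mod_cast congrArg (fun k : ℕ => (k : R) * f p.1 (p.2 + 1)) hchoose

theorem sum_antidiagonal_neg_one_pow_mul_choose_mul_pow {R : Type*} [CommRing R] {m n : ℕ}
    (h : m < n) (a : R) :
    ∑ p ∈ antidiagonal n, (-1) ^ p.2 * (n.choose p.1 : R) * (a + p.1) ^ m = 0 := by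
  have hdiff := congrFun (fwdDiff_iter_pow_eq_zero_of_lt (R := R) h) a
  rw [fwdDiff_iter_eq_sum_shift, Pi.zero_apply] at hdiff
  rw [Nat.sum_antidiagonal_eq_sum_range_succ_mk, ← hdiff]
  refine sum_congr rfl fun k _ => ?_
  simp [zsmul_eq_mul]

theorem Polynomial.eq_of_derivative_eq_of_eval_eq {R : Type*} [CommRing R] [IsAddTorsionFree R]
    {p q : R[X]} (hd : derivative p = derivative q) (a : R) (he : p.eval a = q.eval a) :
    p = q := by
  have hconst := eq_C_of_derivative_eq_zero (p := p - q) (by rw [derivative_sub, hd, sub_self])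
  have hcoeff := congrArg (eval a) hconst
  rw [eval_sub, he, sub_self, eval_C] at hcoeff
  rwa [← hcoeff, C_0, sub_eq_zero] at hconst

theorem abel_identity_at_root (n : ℕ) :
    ∑ p ∈ antidiagonal (n + 1), ((n + 1).choose p.1 * (p.1 + 1) ^ (p.1 - 1) : ℚ) *
      (-(n + 2) + p.2) ^ p.2 = 0 := by
  rw [← sum_antidiagonal_neg_one_pow_mul_choose_mul_pow (Nat.lt_succ_self n) (1 : ℚ)]
  refine sum_congr rfl fun ⟨i, j⟩ hp => ?_
  have hij : i + j = n + 1 := mem_antidiagonal.mp hp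
  have hbase : -(n + 2) + (j : ℚ) = -(i + 1) := by
    linarith [(by exact_mod_cast hij : (i : ℚ) + j = n + 1)]
  -- for `i = 0` the truncated exponent `0 - 1 = 0` is harmless because the base is `1`
  have hpow : ((i : ℚ) + 1) ^ (i - 1) * (i + 1) ^ j = (1 + i) ^ n := by
    rcases i with _ | i
    · simp
    · rw [← pow_add, add_comm (1 : ℚ)]; congr 1; omega
  rw [hbase, neg_pow, ← hpow]
  ring

theorem abel_identity_poly (n : ℕ) :
    ∑ p ∈ antidiagonal n, ((n.choose p.1 * (p.1 + 1) ^ (p.1 - 1) : ℕ) : ℚ[X]) *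
      (X + (p.2 : ℚ[X])) ^ p.2 = (X + n + 1) ^ n := by
  induction n with
  | zero => simp
  | succ n ih =>
    refine eq_of_derivative_eq_of_eval_eq ?_ (-(n + 2)) ?_
    · have hshift := congrArg (fun P => P.comp (X + 1)) ih
      simp only [Polynomial.sum_comp, mul_comp, pow_comp, add_comp, X_comp, natCast_comp,
        one_comp] at hshift
      let f : ℕ → ℕ → ℚ[X] := fun i j =>
        (((i + 1) ^ (i - 1) : ℕ) : ℚ[X]) * (X + (j : ℚ[X])) ^ (j - 1)
      calc _ = ∑ p ∈ antidiagonal (n + 1), ((n + 1).choose p.1 * p.2 : ℚ[X]) * f p.1 p.2 := by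
            simp only [derivative_sum, derivative_mul, derivative_natCast, zero_mul, zero_add,
              derivative_pow, derivative_add, derivative_X, add_zero, C_eq_natCast, f]
            refine sum_congr rfl fun p _ => ?_
            push_cast
            ring
        _ = (n + 1) * ∑ p ∈ antidiagonal n, (n.choose p.1 : ℚ[X]) * f p.1 (p.2 + 1) :=
          sum_antidiagonal_choose_mul_snd_mul n f
        _ = ((n : ℚ[X]) + 1) * (X + 1 + (n : ℚ[X]) + 1) ^ n := by
          rw [← hshift]
          congr 1
          refine sum_congr rfl fun p _ => ?_
          simp only [f]
          push_cast
          ring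
        _ = _ := by
          simp only [derivative_pow, derivative_add, derivative_X, derivative_natCast,
            derivative_one, add_zero, mul_one, C_eq_natCast, Nat.add_sub_cancel]
          push_cast
          ring
    · simp only [eval_finsetSum, eval_mul, eval_pow, eval_add, eval_X, eval_natCast, eval_one]
      push_cast
      rw [abel_identity_at_root]
      ring

theorem abel_identity (n : ℕ) (y : ℚ) :
    ∑ p ∈ antidiagonal n, (n.choose p.1 : ℚ) * (p.1 + 1) ^ (p.1 - 1) * (y + p.2) ^ p.2 =
      (y + n + 1) ^ n := by
  simpa [eval_finsetSum] using congrArg (eval y) (abel_identity_poly n)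

-- The factor `n + 2` makes the identity hold for `n = 0` as well, despite `0 - 1 = 0` in `ℕ`.
theorem abel_identity_convolution (n : ℕ) :
    (n + 2 : ℚ) * ∑ p ∈ antidiagonal n,
      (n.choose p.1 : ℚ) * (p.1 + 1) ^ (p.1 - 1) * (p.2 + 1) ^ (p.2 - 1) = 2 * (n + 2) ^ n := by
  rcases n with _ | m
  · norm_num
  have hsplit (j : ℕ) : ((j : ℚ) + 1) ^ (j - 1) = (1 + j) ^ j - j * (j + 1) ^ (j - 1) := by
    rcases j with _ | k
    · simp
    · push_cast; ring
  have hreindex : ∑ p ∈ antidiagonal (m + 1), ((m + 1).choose p.1 * p.2 : ℚ) *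
      ((p.1 + 1) ^ (p.1 - 1) * (p.2 + 1) ^ (p.2 - 1)) = (m + 1) * (2 + m + 1) ^ m := by
    rw [sum_antidiagonal_choose_mul_snd_mul m
      (fun i j => ((i : ℚ) + 1) ^ (i - 1) * ((j : ℚ) + 1) ^ (j - 1)), ← abel_identity]
    congr 1
    refine sum_congr rfl fun p _ => ?_
    push_cast
    ring_nf
  calc _ = ((m + 1 : ℕ) + 2 : ℚ) * (∑ p ∈ antidiagonal (m + 1),
        ((m + 1).choose p.1 : ℚ) * (p.1 + 1) ^ (p.1 - 1) * (1 + p.2) ^ p.2 -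
        ∑ p ∈ antidiagonal (m + 1), ((m + 1).choose p.1 * p.2 : ℚ) *
          ((p.1 + 1) ^ (p.1 - 1) * (p.2 + 1) ^ (p.2 - 1))) := by
        rw [← sum_sub_distrib]
        congr 1
        refine sum_congr rfl fun p _ => ?_
        linear_combination ((m + 1).choose p.1 * (p.1 + 1) ^ (p.1 - 1) : ℚ) * hsplit p.2
    _ = 2 * ((m + 1 : ℕ) + 2) ^ (m + 1) := by
      rw [abel_identity, hreindex]
      push_cast
      ring

theorem sum_antidiagonal_div_factorial_mul_factorial (a : ℕ × ℕ → ℚ) (n : ℕ) :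
    ∑ p ∈ antidiagonal n, a p / (p.1 ! * p.2 !) =
      (∑ p ∈ antidiagonal n, n.choose p.1 * a p) / n ! := by
  rw [sum_div]
  refine sum_congr rfl fun p hp => ?_
  rw [← mem_antidiagonal.mp hp, ← Nat.add_choose_mul_factorial_mul_factorial, Nat.choose_symm_add]
  have hchoose : ((p.1 + p.2).choose p.2 : ℚ) ≠ 0 :=
    Nat.cast_ne_zero.mpr (Nat.choose_pos (Nat.le_add_left _ _)).ne'
  push_cast
  field_simp

namespace BinaryTree

theorem sum_treesOfNumNodesEq_succ {M : Type*} [AddCommMonoid M]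
    (F : BinaryTree Unit → M) (n : ℕ) :
    ∑ T ∈ treesOfNumNodesEq (n + 1), F T =
      ∑ p ∈ antidiagonal n, ∑ l ∈ treesOfNumNodesEq p.1, ∑ r ∈ treesOfNumNodesEq p.2,
        F (node () l r) := by
  rw [treesOfNumNodesEq_succ, sum_biUnion]
  · refine sum_congr rfl fun p _ => ?_
    rw [sum_map, sum_product]
    rfl
  · simp_rw [Set.PairwiseDisjoint, Set.Pairwise, disjoint_left]
    aesop

end BinaryTree

noncomputable def hookSum (f : ℕ → ℚ) (n : ℕ) : ℚ :=
  ∑ T ∈ BinaryTree.treesOfNumNodesEq n, hookProd f T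

theorem hookSum_zero (f : ℕ → ℚ) : hookSum f 0 = 1 := by
  simp [hookSum, hookProd]

theorem hookSum_succ (f : ℕ → ℚ) (n : ℕ) :
    hookSum f (n + 1) = f (n + 1) * ∑ p ∈ antidiagonal n, hookSum f p.1 * hookSum f p.2 := by
  simp only [hookSum, BinaryTree.sum_treesOfNumNodesEq_succ, sum_mul_sum]
  simp only [mul_sum]
  refine sum_congr rfl fun p hp => sum_congr rfl fun l hl => sum_congr rfl fun r hr => ?_
  rw [BinaryTree.mem_treesOfNumNodesEq] at hl hr
  rw [hookProd, hl, hr, mem_antidiagonal.mp hp, mul_assoc]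

theorem hookSum_one_add_inv (n : ℕ) :
    hookSum (fun h => 1 + 1 / (h : ℚ)) n = 2 ^ n * (n + 1) ^ (n - 1) / n ! := by
  induction n using Nat.strong_induction_on with
  | _ n ih =>
  rcases n with _ | n
  · simp [hookSum_zero]
  calc hookSum (fun h => 1 + 1 / (h : ℚ)) (n + 1)
      = (1 + 1 / (n + 1 : ℚ)) * ∑ p ∈ antidiagonal n,
          2 ^ n * ((p.1 + 1 : ℚ) ^ (p.1 - 1) * (p.2 + 1) ^ (p.2 - 1)) / (p.1 ! * p.2 !) := by
        rw [hookSum_succ]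
        push_cast
        congr 1
        refine sum_congr rfl fun p hp => ?_
        have hn : p.1 + p.2 = n := mem_antidiagonal.mp hp
        rw [ih p.1 (by omega), ih p.2 (by omega), ← hn, pow_add]
        ring
    _ = (1 + 1 / (n + 1 : ℚ)) * (2 ^ n * ∑ p ∈ antidiagonal n,
          (n.choose p.1 : ℚ) * (p.1 + 1) ^ (p.1 - 1) * (p.2 + 1) ^ (p.2 - 1)) / n ! := by
      rw [sum_antidiagonal_div_factorial_mul_factorial, mul_sum, mul_div_assoc]
      congr 2
      exact sum_congr rfl fun p _ => by ring
    _ = _ := by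
      rw [Nat.factorial_succ, Nat.add_sub_cancel]
      push_cast
      field_simp
      linear_combination 2 ^ n * abel_identity_convolution n

theorem postnikov_formula_general (n : ℕ) :
    ∑ T ∈ Tree.treesOfNumNodesEq n,
      ((n.factorial : ℚ) / 2 ^ n) * hookProd (fun h => 1 + 1 / (h : ℚ)) T
      = (n + 1 : ℚ) ^ (n - 1) := by
  rw [← mul_sum]
  change _ * hookSum _ n = _
  rw [hookSum_one_add_inv]
  field_simp

theorem postnikov_formula (n : ℕ) (hn : 0 < n) :
    ∑ T ∈ Tree.treesOfNumNodesEq n,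
      ((n.factorial : ℚ) / 2 ^ n) * hookProd (fun h => 1 + 1 / (h : ℚ)) T
      = (n + 1 : ℚ) ^ (n - 1) :=
  postnikov_formula_general n
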